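/- arXiv:1409.7972 — 4 statements merged into one kernel-verified Lean document; each statement's English description precedes it below -/
import Mathlib

section
/- Let M = (6n-1)² for a nonzero integer n, and let a, s be positive integers. Then ∑_{i=0}^{M-1}(a+i)² = s² if and only if (6n-1) divides s and (s/(6n-1))² - (a + 6n(3n-1))² = 2n(3n-1)·(6n(3n-1)+1). -/
lemma sum_sq_aux (a : ℤ) : ∀ N : ℕ, 6 * ∑ i ∈ Finset.range N, (a + i) ^ 2 =
    (N : ℤ) * (6 * a ^ 2 + 6 * a * ((N : ℤ) - 1) + ((N : ℤ) - 1) * (2 * (N : ℤ) - 1)) := by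
  intro N
  induction N with
  | zero => simp
  | succ N ih =>
    rw [Finset.sum_range_succ]
    push_cast
    linear_combination ih

theorem sum_squares_square_M (n : ℤ) (hn : n ≠ 0) (a s : ℤ) (ha : 0 < a) (hs : 0 < s) :
    (∑ i ∈ Finset.range (((6 * n - 1) ^ 2).toNat), (a + i) ^ 2 = s ^ 2) ↔
      (6 * n - 1) ∣ s ∧
        (s / (6 * n - 1)) ^ 2 - (a + 6 * n * (3 * n - 1)) ^ 2 =
          2 * n * (3 * n - 1) * (6 * n * (3 * n - 1) + 1) := by
  set m : ℤ := 6 * n - 1 with hm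
  have hm0 : m ≠ 0 := by
    intro h
    omega
  have hcast : ((((6 * n - 1) ^ 2).toNat : ℤ)) = m ^ 2 := by
    rw [Int.toNat_of_nonneg (by positivity)]
  have hsum : ∑ i ∈ Finset.range (((6 * n - 1) ^ 2).toNat), (a + i) ^ 2 =
      m ^ 2 * ((a + 6 * n * (3 * n - 1)) ^ 2 +
        2 * n * (3 * n - 1) * (6 * n * (3 * n - 1) + 1)) := by
    have h6 := sum_sq_aux a (((6 * n - 1) ^ 2).toNat)
    rw [hcast] at h6
    have : (6 : ℤ) ≠ 0 := by norm_num
    apply mul_left_cancel₀ this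
    rw [h6, hm]
    ring
  rw [hsum]
  constructor
  · intro h
    have hdvd : m ∣ s := by
      rw [← Int.pow_dvd_pow_iff (two_ne_zero)]
      exact ⟨_, h.symm⟩
    refine ⟨hdvd, ?_⟩
    obtain ⟨t, ht⟩ := hdvd
    subst ht
    rw [Int.mul_ediv_cancel_left _ hm0]
    have : m ^ 2 * ((a + 6 * n * (3 * n - 1)) ^ 2 +
        2 * n * (3 * n - 1) * (6 * n * (3 * n - 1) + 1)) = m ^ 2 * t ^ 2 := by
      rw [h]; ring
    have := mul_left_cancel₀ (pow_ne_zero 2 hm0) this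
    linarith
  · rintro ⟨⟨t, ht⟩, h⟩
    subst ht
    rw [Int.mul_ediv_cancel_left _ hm0] at h
    nlinarith [h]
end

section
/- Let M = (6n-1)² for a nonzero integer n. Then there are only finitely many pairs of positive integers (a, s) with ∑_{i=0}^{M-1}(a+i)² = s². -/
lemma sum_shift_sq (a : ℤ) : ∀ N : ℕ,
    6 * ∑ i ∈ Finset.range N, (a + i) ^ 2 =
      N * (6 * a ^ 2 + 6 * a * ((N : ℤ) - 1) + ((N : ℤ) - 1) * (2 * (N : ℤ) - 1))
  | 0 => by simp
  | N + 1 => by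
      rw [Finset.sum_range_succ, mul_add, sum_shift_sq a N]
      push_cast
      ring

theorem sum_squares_square_M_finite (n : ℤ) (hn : n ≠ 0) :
    {p : ℤ × ℤ | 0 < p.1 ∧ 0 < p.2 ∧
      ∑ i ∈ Finset.range (((6 * n - 1) ^ 2).toNat), (p.1 + i) ^ 2 = p.2 ^ 2}.Finite := by
  set M : ℤ := (6 * n - 1) ^ 2 with hMdef
  have hm : (5 : ℤ) ≤ |6 * n - 1| := by
    rcases lt_or_gt_of_ne hn with h | h
    · rw [abs_of_nonpos (by linarith)]; linarith
    · rw [abs_of_nonneg (by linarith)]; linarith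
  have hM25 : (25 : ℤ) ≤ M := by
    have : M = |6 * n - 1| ^ 2 := by rw [hMdef, sq_abs]
    nlinarith
  have hMt : ((M.toNat : ℤ)) = M := Int.toNat_of_nonneg (by linarith)
  set C : ℤ := M * (M ^ 2 - 1) with hCdef
  have hC : 0 < C := by nlinarith
  apply Set.Finite.subset (Set.finite_Icc ((1 : ℤ), (1 : ℤ)) (C, C))
  rintro ⟨a, s⟩ ⟨ha, hs, heq⟩
  simp only [Set.mem_Icc, Prod.mk_le_mk]
  have h6 : 6 * s ^ 2 = M * (6 * a ^ 2 + 6 * a * (M - 1) + (M - 1) * (2 * M - 1)) := by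
    have h := sum_shift_sq a (M.toNat)
    rw [hMt] at h
    rw [← h, heq]
  set w : ℤ := |6 * n - 1| * (2 * a + M - 1) with hwdef
  have hsq : w ^ 2 = M * (2 * a + M - 1) ^ 2 := by
    rw [hwdef, mul_pow, sq_abs, hMdef]
  have key : 3 * ((2 * s - w) * (2 * s + w)) = C := by
    rw [hCdef]; linear_combination 2 * h6 - 3 * hsq
  have hw0 : 0 ≤ w := mul_nonneg (abs_nonneg _) (by linarith)
  have hw2a : 2 * a ≤ w := by
    have h1 : (5 : ℤ) * (2 * a + M - 1) ≤ w := by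
      rw [hwdef]
      have : 0 < 2 * a + M - 1 := by linarith
      nlinarith
    linarith
  have hpos : 0 < 2 * s + w := by linarith
  have hd : 0 < 2 * s - w := by nlinarith [key, hpos, hC]
  have hbig : 3 * (2 * s + w) ≤ C := by nlinarith [key, hpos, hd]
  refine ⟨⟨ha, hs⟩, by linarith, by linarith⟩
end

section
/- The generalized Pell equation X² - 842·Y² = 198982282 has no integer solutions. -/
def pellBits : List ℕ := [8192,4096,2048,1024,512,256,128,64,32,16,8,4,2,1]

def pellB (n : ℕ) : Bool :=
  let v := 842*n*n - 236321
  let k := pellBits.foldl (fun acc b => if (acc+b)*(acc+b) ≤ v then acc+b else acc) 0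
  decide (k*k < v) && decide (v < (k+1)*(k+1))

set_option maxRecDepth 10000 in
lemma pellBall : (List.range' 17 470).all pellB = true := by decide

lemma pell_finite_check (n : ℕ) (h1 : 17 ≤ n) (h2 : n ≤ 486) (a : ℕ)
    (ha : a^2 + 236321 = 842*n^2) : False := by
  have hmem : n ∈ List.range' 17 470 := by
    have : n = 17 + 1 * (n - 17) := by omega
    rw [List.mem_range']
    exact ⟨n - 17, by omega, this⟩
  have hB := List.all_eq_true.mp pellBall n hmem
  unfold pellB at hB
  simp only [Bool.and_eq_true, decide_eq_true_eq] at hB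
  set v := 842*n*n - 236321 with hv
  set k := pellBits.foldl (fun acc b => if (acc+b)*(acc+b) ≤ v then acc+b else acc) 0 with hk
  obtain ⟨hB1, hB2⟩ := hB
  have hav : a*a = v := by
    have : a^2 = 842*n*n - 236321 := by ring_nf; ring_nf at ha; omega
    rw [hv, ← this]; ring
  have h3 : k < a := by nlinarith
  have h4 : a < k+1 := by nlinarith
  omega

lemma pell_descent : ∀ k : ℕ, ¬ ∃ a : ℤ, a^2 + 236321 = 842*(k:ℤ)^2 := by
  intro k
  induction k using Nat.strong_induction_on with
  | _ k ih =>
    rintro ⟨a0, ha0⟩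
    set a : ℤ := |a0| with hadef
    have haeq : a^2 + 236321 = 842*(k:ℤ)^2 := by rw [hadef, sq_abs]; exact ha0
    have hapos : 0 ≤ a := abs_nonneg a0
    by_cases hk : k ≤ 486
    · -- finite check
      have h17 : 17 ≤ k := by
        by_contra h
        push_neg at h
        have hk16 : (k:ℤ) ≤ 16 := by exact_mod_cast Nat.le_of_lt_succ h
        have hk0 : (0:ℤ) ≤ (k:ℤ) := Int.ofNat_nonneg k
        nlinarith [sq_nonneg a]
      have hnat : (a.toNat)^2 + 236321 = 842*k^2 := by
        have : ((a.toNat : ℤ))^2 + 236321 = 842*(k:ℤ)^2 := by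
          rw [Int.toNat_of_nonneg hapos]; exact haeq
        exact_mod_cast this
      exact pell_finite_check k h17 hk (a.toNat) hnat
    · push_neg at hk
      have hk487 : (487:ℤ) ≤ (k:ℤ) := by exact_mod_cast hk
      set c : ℤ := 1683*(k:ℤ) - 58*a with hc
      have hceq : (1683*a - 48836*(k:ℤ))^2 + 236321 = 842*c^2 := by
        rw [hc]; linear_combination haeq
      have hcpos : 0 < c := by nlinarith [sq_nonneg (1683*(k:ℤ) + 58*a)]
      have hclt : c < (k:ℤ) := by nlinarith [sq_nonneg (58*a + 1682*(k:ℤ))]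
      have hm : (c.toNat : ℤ) = c := Int.toNat_of_nonneg hcpos.le
      have hmlt : c.toNat < k := by
        have : (c.toNat : ℤ) < (k:ℤ) := by rw [hm]; exact hclt
        exact_mod_cast this
      exact ih c.toNat hmlt ⟨1683*a - 48836*(k:ℤ), by rw [hm]; exact hceq⟩

theorem pell_842_no_solution : ¬ ∃ X Y : ℤ, X ^ 2 - 842 * Y ^ 2 = 198982282 := by
  rintro ⟨X, Y, h⟩
  have hp421 : Prime (421:ℤ) := by norm_num
  have hdvd : (421:ℤ) ∣ X^2 := ⟨2*Y^2 + 472642, by linarith⟩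
  have hX : (421:ℤ) ∣ X := hp421.dvd_of_dvd_pow hdvd
  obtain ⟨x, hx⟩ := hX
  have h2 : 421*x^2 - 2*Y^2 = 472642 := by
    have : (421*x)^2 - 842*Y^2 = 198982282 := by rw [← hx]; exact h
    nlinarith [this]
  have hdvd2 : (2:ℤ) ∣ x^2 := by
    have h2d : (2:ℤ) ∣ 421*x^2 := ⟨Y^2 + 236321, by linarith⟩
    have hp2 : Prime (2:ℤ) := Int.prime_two
    rcases (hp2.dvd_mul.mp h2d) with h' | h'
    · norm_num at h'
    · exact h'
  have hx2 : (2:ℤ) ∣ x := (Int.prime_two).dvd_of_dvd_pow hdvd2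
  obtain ⟨w, hw⟩ := hx2
  have h3 : Y^2 + 236321 = 842*w^2 := by
    have : 421*(2*w)^2 - 2*Y^2 = 472642 := by rw [← hw]; exact h2
    nlinarith [this]
  have h4 : Y^2 + 236321 = 842*((w.natAbs : ℤ))^2 := by
    rwa [← Int.abs_eq_natAbs, sq_abs]
  exact pell_descent w.natAbs ⟨Y, h4⟩
end

section
/- The equation s² - 25·(a+12)² = 1300 (equivalently ∑_{i=0}^{24}(a+i)² = s² for M = 25) has no solutions in positive integers a, s; its only solution with a ≥ 0 is (a, s) = (0, 70). -/
lemma M25_aux (a s : ℤ) (ha : 0 ≤ a) (hs : 0 < s)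
    (h : s ^ 2 - 25 * (a + 12) ^ 2 = 1300) : a = 0 ∧ s = 70 := by
  have h5 : (5:ℤ) ∣ s := by
    have hd : (5:ℤ) ^ 2 ∣ s ^ 2 := ⟨(a + 12) ^ 2 + 52, by ring_nf; linarith⟩
    exact (Int.pow_dvd_pow_iff (by norm_num)).mp hd
  obtain ⟨t, rfl⟩ := h5
  have ht : 0 < t := by omega
  have ht2 : t ^ 2 = (a + 12) ^ 2 + 52 := by nlinarith [h]
  have h1 : a + 12 < t := by nlinarith
  have hta : a ≤ 13 := by nlinarith
  have htle : t ≤ 26 := by nlinarith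
  have ht1 : 13 ≤ t := by omega
  interval_cases a <;> interval_cases t <;> omega

theorem M_25_solutions :
    (¬ ∃ a s : ℤ, 0 < a ∧ 0 < s ∧ s ^ 2 - 25 * (a + 12) ^ 2 = 1300) ∧
      (∀ a s : ℤ, 0 ≤ a → 0 < s → s ^ 2 - 25 * (a + 12) ^ 2 = 1300 → a = 0 ∧ s = 70) := by
  refine ⟨?_, fun a s ha hs h => M25_aux a s ha hs h⟩
  rintro ⟨a, s, ha, hs, h⟩
  obtain ⟨h0, -⟩ := M25_aux a s ha.le hs h
  omega
end
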